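/- Let K ≥ 1 and let W be a Borel probability measure on ℝ^K with finite first moment; set c := ∫ ‖w‖ dW(w). Then for all Borel probability measures R and R' on ℝ^K with finite first moments, W₁(Y_{W,R}, Y_{W,R'}) ≤ c · W₁(R, R'). In particular, if W₁(R, R̂) ≤ ε for a center measure R̂ and radius ε ≥ 0, then W₁(Y_{W,R}, Y_{W,R̂}) ≤ c·ε. -/

import Mathlib

open MeasureTheory ENNReal

noncomputable section

/-- A coupling of two measures: a measure on the product whose marginals are the given
measures. -/
def IsCoupling {X Y : Type*} [MeasurableSpace X] [MeasurableSpace Y]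
    (π : Measure (X × Y)) (μ : Measure X) (ν : Measure Y) : Prop :=
  π.map Prod.fst = μ ∧ π.map Prod.snd = ν

/-- The 1-Wasserstein distance (as an extended nonnegative real): the infimum over
couplings of the integral of the distance. -/
noncomputable def W1 {X : Type*} [MeasurableSpace X] [PseudoEMetricSpace X]
    (μ ν : Measure X) : ℝ≥0∞ :=
  ⨅ (π : Measure (X × X)) (_ : IsCoupling π μ ν), ∫⁻ p, edist p.1 p.2 ∂π

/-- The induced portfolio-outcome law `Y_{W,R}`: pushforward of `W ⊗ R` under
`(w, r) ↦ ⟨r, w⟩`. -/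
noncomputable def outcomeLaw {K : ℕ} (W R : Measure (EuclideanSpace ℝ (Fin K))) :
    Measure ℝ :=
  (W.prod R).map (fun p => (inner ℝ p.2 p.1 : ℝ))

/-! Given a coupling `π` of `R` and `R'`, draw `w ~ W` independently of `(r, r') ~ π`: the law
of `(⟨r, w⟩, ⟨r', w⟩)` couples the two outcome laws, and since `r ↦ ⟨r, w⟩` is
`‖w‖`-Lipschitz, its cost is at most `∫ ‖w‖ dW` times the cost of `π`. Taking the infimum
over `π` gives the bound. -/

namespace IsCoupling

variable {X Y : Type*} [MeasurableSpace X] [MeasurableSpace Y]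
  {π : Measure (X × Y)} {μ : Measure X} {ν : Measure Y}

lemma isProbabilityMeasure [IsProbabilityMeasure μ] (h : IsCoupling π μ ν) :
    IsProbabilityMeasure π := by
  refine ⟨?_⟩
  rw [← Set.preimage_univ (f := Prod.fst), ← Measure.map_apply measurable_fst .univ, h.1,
    measure_univ]

lemma map {X' Y' : Type*} [MeasurableSpace X'] [MeasurableSpace Y'] (h : IsCoupling π μ ν)
    {f : X → X'} {g : Y → Y'} (hf : Measurable f) (hg : Measurable g) :
    IsCoupling (π.map (Prod.map f g)) (μ.map f) (ν.map g) := by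
  constructor
  · rw [Measure.map_map measurable_fst (hf.prodMap hg), ← h.1,
      Measure.map_map hf measurable_fst]
    rfl
  · rw [Measure.map_map measurable_snd (hf.prodMap hg), ← h.2,
      Measure.map_map hg measurable_snd]
    rfl

lemma prod_left {Z : Type*} [MeasurableSpace Z] (h : IsCoupling π μ ν)
    (W : Measure Z) [SFinite W] [SFinite π] :
    IsCoupling ((W.prod π).map fun q => ((q.1, q.2.1), (q.1, q.2.2))) (W.prod μ) (W.prod ν) := by
  have hT : Measurable fun q : Z × X × Y => ((q.1, q.2.1), (q.1, q.2.2)) := by fun_prop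
  constructor
  · rw [Measure.map_map measurable_fst hT, ← h.1, ← Measure.map_id (μ := W),
      Measure.map_prod_map _ _ measurable_id measurable_fst, Measure.map_id]
    rfl
  · rw [Measure.map_map measurable_snd hT, ← h.2, ← Measure.map_id (μ := W),
      Measure.map_prod_map _ _ measurable_id measurable_snd, Measure.map_id]
    rfl

end IsCoupling

lemma isCoupling_prod {X Y : Type*} [MeasurableSpace X] [MeasurableSpace Y]
    (μ : Measure X) (ν : Measure Y) [IsProbabilityMeasure μ] [IsProbabilityMeasure ν] :
    IsCoupling (μ.prod ν) μ ν := by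
  constructor <;> simp

section W1

variable {X : Type*} [MeasurableSpace X] [PseudoEMetricSpace X] {μ ν : Measure X}

lemma W1_le_lintegral_edist {π : Measure (X × X)} (h : IsCoupling π μ ν) :
    W1 μ ν ≤ ∫⁻ p, edist p.1 p.2 ∂π :=
  iInf₂_le π h

lemma le_mul_W1_of_forall_isCoupling {a c : ℝ≥0∞} (hc : c ≠ ∞)
    (hne : ∃ π, IsCoupling π μ ν)
    (h : ∀ π, IsCoupling π μ ν → a ≤ c * ∫⁻ p, edist p.1 p.2 ∂π) :
    a ≤ c * W1 μ ν := by
  rcases eq_or_ne c 0 with rfl | hc₀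
  · obtain ⟨π, hπ⟩ := hne
    simpa using h π hπ
  · simp only [W1, ENNReal.mul_iInf_of_ne hc₀ hc]
    exact le_iInf₂ h

end W1

theorem W1_map_prod_le {Z X Y : Type*} [MeasurableSpace Z] [MeasurableSpace X]
    [PseudoEMetricSpace X] [OpensMeasurableSpace X] [SecondCountableTopology X]
    [MeasurableSpace Y] [PseudoEMetricSpace Y]
    (W : Measure Z) [SFinite W] (R R' : Measure X) [IsProbabilityMeasure R]
    [IsProbabilityMeasure R'] {f : Z × X → Y} (hf : Measurable f) {L : Z → NNReal}
    (hL : Measurable L) (hfL : ∀ z, LipschitzWith (L z) fun x => f (z, x))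
    (hLW : ∫⁻ z, (L z : ℝ≥0∞) ∂W ≠ ∞) :
    W1 ((W.prod R).map f) ((W.prod R').map f) ≤ (∫⁻ z, (L z : ℝ≥0∞) ∂W) * W1 R R' := by
  refine le_mul_W1_of_forall_isCoupling hLW ⟨_, isCoupling_prod R R'⟩ fun π hπ => ?_
  have := hπ.isProbabilityMeasure
  refine ((hπ.prod_left W).map hf hf |> W1_le_lintegral_edist).trans ?_
  calc ∫⁻ p, edist p.1 p.2 ∂(((W.prod π).map _).map (Prod.map f f))
      ≤ ∫⁻ q, edist (f (q.1, q.2.1)) (f (q.1, q.2.2)) ∂(W.prod π) :=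
        (lintegral_map_le _ _).trans (lintegral_map_le _ _)
    _ ≤ ∫⁻ q, (L q.1 : ℝ≥0∞) * edist q.2.1 q.2.2 ∂(W.prod π) :=
        lintegral_mono fun q => hfL q.1 q.2.1 q.2.2
    _ = (∫⁻ z, (L z : ℝ≥0∞) ∂W) * ∫⁻ p, edist p.1 p.2 ∂π :=
        lintegral_prod_mul hL.coe_nnreal_ennreal.aemeasurable measurable_edist.aemeasurable

lemma lipschitzWith_inner_left {E : Type*} [NormedAddCommGroup E] [InnerProductSpace ℝ E]
    (w : E) : LipschitzWith ‖w‖₊ fun x : E => inner ℝ x w :=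
  LipschitzWith.of_dist_le_mul fun x y => by
    rw [dist_eq_norm, ← inner_sub_left, dist_eq_norm, coe_nnnorm, mul_comm]
    exact norm_inner_le_norm _ _

theorem stmt_1_general {K : ℕ}
    (W : Measure (EuclideanSpace ℝ (Fin K))) [IsProbabilityMeasure W]
    (hWm : ∫⁻ w, (‖w‖₊ : ℝ≥0∞) ∂W < ⊤) :
    (∀ R R' : Measure (EuclideanSpace ℝ (Fin K)),
        IsProbabilityMeasure R → IsProbabilityMeasure R' →
        (∫⁻ r, (‖r‖₊ : ℝ≥0∞) ∂ R) < ⊤ → (∫⁻ r, (‖r‖₊ : ℝ≥0∞) ∂ R') < ⊤ →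
        W1 (outcomeLaw W R) (outcomeLaw W R')
          ≤ (∫⁻ w, (‖w‖₊ : ℝ≥0∞) ∂W) * W1 R R') ∧
    (∀ (R Rhat : Measure (EuclideanSpace ℝ (Fin K))) (ε : ℝ),
        IsProbabilityMeasure R → IsProbabilityMeasure Rhat →
        (∫⁻ r, (‖r‖₊ : ℝ≥0∞) ∂ R) < ⊤ → (∫⁻ r, (‖r‖₊ : ℝ≥0∞) ∂ Rhat) < ⊤ →
        0 ≤ ε → W1 R Rhat ≤ ENNReal.ofReal ε →
        W1 (outcomeLaw W R) (outcomeLaw W Rhat)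
          ≤ (∫⁻ w, (‖w‖₊ : ℝ≥0∞) ∂W) * ENNReal.ofReal ε) := by
  have lipschitz : ∀ R R' : Measure (EuclideanSpace ℝ (Fin K)),
      IsProbabilityMeasure R → IsProbabilityMeasure R' →
      W1 (outcomeLaw W R) (outcomeLaw W R') ≤ (∫⁻ w, (‖w‖₊ : ℝ≥0∞) ∂W) * W1 R R' :=
    fun R R' _ _ => W1_map_prod_le W R R' (by fun_prop) measurable_nnnorm
      lipschitzWith_inner_left hWm.ne
  refine ⟨fun R R' hR hR' _ _ => lipschitz R R' hR hR', ?_⟩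
  intro R Rhat ε hR hRhat _ _ _ hε
  exact (lipschitz R Rhat hR hRhat).trans (mul_le_mul_right hε _)

theorem stmt_1 {K : ℕ} (hK : 1 ≤ K)
    (W : Measure (EuclideanSpace ℝ (Fin K))) [IsProbabilityMeasure W]
    (hWm : ∫⁻ w, (‖w‖₊ : ℝ≥0∞) ∂W < ⊤) :
    (∀ R R' : Measure (EuclideanSpace ℝ (Fin K)),
        IsProbabilityMeasure R → IsProbabilityMeasure R' →
        (∫⁻ r, (‖r‖₊ : ℝ≥0∞) ∂ R) < ⊤ → (∫⁻ r, (‖r‖₊ : ℝ≥0∞) ∂ R') < ⊤ →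
        W1 (outcomeLaw W R) (outcomeLaw W R')
          ≤ (∫⁻ w, (‖w‖₊ : ℝ≥0∞) ∂W) * W1 R R') ∧
    (∀ (R Rhat : Measure (EuclideanSpace ℝ (Fin K))) (ε : ℝ),
        IsProbabilityMeasure R → IsProbabilityMeasure Rhat →
        (∫⁻ r, (‖r‖₊ : ℝ≥0∞) ∂ R) < ⊤ → (∫⁻ r, (‖r‖₊ : ℝ≥0∞) ∂ Rhat) < ⊤ →
        0 ≤ ε → W1 R Rhat ≤ ENNReal.ofReal ε →
        W1 (outcomeLaw W R) (outcomeLaw W Rhat)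
          ≤ (∫⁻ w, (‖w‖₊ : ℝ≥0∞) ∂W) * ENNReal.ofReal ε) :=
  stmt_1_general W hWm
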